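/- For any two strings X and Y of the same length n, and any partition points 0 = j_0 < j_1 < ... < j_B = n, and any integer shifts s_1, ..., s_B, the edit distance ED(X, Y) is at most the sum over i of ED(X[j_{i-1}..j_i), Y[j_{i-1}+s_i .. j_i+s_i)) + 2|s_i|. -/

import Mathlib

/-! Cutting `X` and `Y` at the same positions `j i` and aligning corresponding pieces separately
yields an alignment of `X` with `Y`, so `ED` is subadditive over the blocks. Moving the window of
`Y` by `s` deletes at most `|s|` characters at one end of it and inserts at most `|s|` at the other,
and each inserted or deleted character changes the edit distance by at most one. -/

open Finset

/-- Cost structure for edit distance (removed from Mathlib; restored with its old meaning). -/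
structure Levenshtein.Cost (α β δ : Type*) where
  delete : α → δ
  insert : β → δ
  substitute : α → β → δ

/-- Unit costs, as in the old `Levenshtein.defaultCost`. -/
def Levenshtein.defaultCost {α : Type*} [DecidableEq α] : Levenshtein.Cost α α ℕ where
  delete _ := 1
  insert _ := 1
  substitute a b := if a = b then 0 else 1

/-- Levenshtein distance, by the recursion the old Mathlib `levenshtein` satisfied
(`levenshtein_nil_nil`, `levenshtein_nil_cons`, `levenshtein_cons_nil`, `levenshtein_cons_cons`). -/
def levenshtein {α β δ : Type*} [AddZeroClass δ] [Min δ] (C : Levenshtein.Cost α β δ) :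
    List α → List β → δ
  | [], [] => 0
  | [], y :: ys => C.insert y + levenshtein C [] ys
  | x :: xs, [] => C.delete x + levenshtein C xs []
  | x :: xs, y :: ys =>
    min (C.delete x + levenshtein C xs (y :: ys))
      (min (C.insert y + levenshtein C (x :: xs) ys) (C.substitute x y + levenshtein C xs ys))

/-- Edit distance of two lists (unit-cost Levenshtein distance). -/
def ED {α : Type*} [DecidableEq α] (X Y : List α) : ℕ :=
  levenshtein Levenshtein.defaultCost X Y

/-- Clamped substring `X[a..b)`: out-of-bounds indices are clamped to `[0, |X|)`. -/
def sub {α : Type*} (X : List α) (a b : ℤ) : List α :=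
  (X.take b.toNat).drop a.toNat

/-- Hamming distance between (equal-length) lists. -/
def HD {α : Type*} [DecidableEq α] (X Y : List α) : ℕ :=
  ((X.zip Y).filter (fun p => p.1 ≠ p.2)).length

/-- `A` is an optimal alignment between `X` and `Y`. -/
def IsOptAlign {α : Type*} [DecidableEq α] (X Y : List α) (A : ℕ → ℕ) : Prop :=
  A 0 = 0 ∧ A X.length = Y.length ∧
    (∀ i j, i ≤ j → j ≤ X.length → A i ≤ A j) ∧
    ED X Y = ∑ i ∈ Finset.range X.length,
      ED (sub X i (i + 1)) (sub Y (A i) (A (i + 1)))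

theorem exists_window_overlap {α : Type*} (Y : List α) {a a' b b' : ℕ} (ha : a ≤ a')
    (hb : b ≤ b') :
    ∃ p c q : List α, (Y.take b).drop a = p ++ c ∧ (Y.take b').drop a' = c ++ q ∧
      p.length ≤ a' - a ∧ q.length ≤ b' - b := by
  have htake : Y.take b' = Y.take b ++ (Y.take b').drop b := by
    conv_lhs => rw [← List.take_append_drop b (Y.take b')]
    rw [List.take_take, min_eq_left hb]
  refine ⟨((Y.take b).drop a).take (a' - a), (Y.take b).drop a',
    ((Y.take b').drop b).drop (a' - (Y.take b).length), ?_, ?_, ?_, ?_⟩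
  · conv_lhs => rw [← List.take_append_drop (a' - a) ((Y.take b).drop a)]
    rw [List.drop_drop, Nat.add_sub_cancel' ha]
  · conv_lhs => rw [htake]
    rw [List.drop_append]
  · simp only [List.length_take]; omega
  · simp only [List.length_drop, List.length_take]; omega

section EditDistance

variable {α : Type*} [DecidableEq α]

theorem ED_nil_left (y : List α) : ED [] y = y.length := by
  induction y with
  | nil => rw [ED, levenshtein]; rfl
  | cons b y ih => rw [ED, levenshtein, ← ED, ih, List.length_cons, Nat.add_comm]; rfl

theorem ED_nil_right (x : List α) : ED x [] = x.length := by
  induction x with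
  | nil => rw [ED, levenshtein]; rfl
  | cons a x ih => rw [ED, levenshtein, ← ED, ih, List.length_cons, Nat.add_comm]; rfl

theorem ED_cons_cons (a b : α) (x y : List α) :
    ED (a :: x) (b :: y) =
      min (1 + ED x (b :: y)) (min (1 + ED (a :: x) y) ((if a = b then 0 else 1) + ED x y)) := by
  rw [ED, levenshtein]; rfl

theorem ED_cons_left_le (a : α) (x y : List α) : ED (a :: x) y ≤ ED x y + 1 := by
  cases y with
  | nil => simp [ED_nil_right]
  | cons b y => rw [ED_cons_cons]; omega

theorem ED_cons_right_le (x : List α) (b : α) (y : List α) : ED x (b :: y) ≤ ED x y + 1 := by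
  cases x with
  | nil => simp [ED_nil_left]
  | cons a x => rw [ED_cons_cons]; omega

theorem ED_append_le (x₁ x₂ y₁ y₂ : List α) :
    ED (x₁ ++ x₂) (y₁ ++ y₂) ≤ ED x₁ y₁ + ED x₂ y₂ := by
  induction x₁ generalizing y₁ with
  | nil =>
    induction y₁ with
    | nil => simp [ED_nil_left]
    | cons b y₁ ih =>
      have := ED_cons_right_le x₂ b (y₁ ++ y₂)
      simp only [List.nil_append, List.cons_append, ED_nil_left, List.length_cons] at ih this ⊢
      omega
  | cons a x₁ ih =>
    induction y₁ with
    | nil =>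
      have := ED_cons_left_le a (x₁ ++ x₂) y₂
      have := ih []
      simp only [List.nil_append, List.cons_append, ED_nil_right, List.length_cons] at *
      omega
    | cons b y₁ ihy =>
      have := ih (b :: y₁)
      have := ih y₁
      simp only [List.cons_append] at *
      rw [ED_cons_cons, ED_cons_cons]
      omega

theorem ED_append_le_append_cons (x y₁ y₂ : List α) (c : α) :
    ED x (y₁ ++ y₂) ≤ ED x (y₁ ++ c :: y₂) + 1 := by
  induction x generalizing y₁ with
  | nil => simp only [ED_nil_left, List.length_append, List.length_cons]; omega
  | cons a x ih =>
    induction y₁ with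
    | nil =>
      have := ED_cons_left_le a x y₂
      have := ih []
      simp only [List.nil_append] at *
      rw [ED_cons_cons]
      omega
    | cons b y₁ ihy =>
      have := ih (b :: y₁)
      have := ih y₁
      simp only [List.cons_append] at *
      rw [ED_cons_cons, ED_cons_cons]
      omega

theorem ED_append_le_append_append (x y w z : List α) :
    ED x (y ++ z) ≤ ED x (y ++ w ++ z) + w.length := by
  induction w with
  | nil => simp
  | cons c w ih =>
    have := ED_append_le_append_cons x y (w ++ z) c
    simp only [List.append_assoc, List.cons_append, List.length_cons] at *
    omega

theorem ED_append_left_le_append_right (x p c q : List α) :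
    ED x (p ++ c) ≤ ED x (c ++ q) + (p.length + q.length) := by
  have hins := ED_append_le [] x p c
  have hdel := ED_append_le_append_append x c q []
  simp only [List.nil_append, List.append_nil, ED_nil_left] at hins hdel
  omega

theorem ED_append_right_le_append_left (x p c q : List α) :
    ED x (c ++ q) ≤ ED x (p ++ c) + (p.length + q.length) := by
  have hins := ED_append_le x [] c q
  have hdel := ED_append_le_append_append x [] p c
  simp only [List.nil_append, List.append_nil, ED_nil_left] at hins hdel
  omega

theorem ED_sub_le_sub_add (x Y : List α) (a b : ℕ) (s : ℤ) :
    ED x (sub Y a b) ≤ ED x (sub Y (a + s) (b + s)) + 2 * s.natAbs := by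
  simp only [sub, Int.toNat_natCast]
  rcases le_total 0 s with hs | hs
  · obtain ⟨p, c, q, h₁, h₂, hp, hq⟩ :=
      exists_window_overlap Y (a := a) (b := b) (a' := (a + s).toNat) (b' := (b + s).toNat)
        (by omega) (by omega)
    rw [h₁, h₂]
    have := ED_append_left_le_append_right x p c q
    omega
  · obtain ⟨p, c, q, h₁, h₂, hp, hq⟩ :=
      exists_window_overlap Y (a := (a + s).toNat) (b := (b + s).toNat) (a' := a) (b' := b)
        (by omega) (by omega)
    rw [h₁, h₂]
    have := ED_append_right_le_append_left x p c q
    omega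

theorem ED_take_le_sum_sub (X Y : List α) (B : ℕ) (j : ℕ → ℕ) (hj0 : j 0 = 0)
    (hj : ∀ i < B, j i ≤ j (i + 1)) :
    ED (X.take (j B)) (Y.take (j B)) ≤
      ∑ i ∈ range B, ED (sub X (j i) (j (i + 1))) (sub Y (j i) (j (i + 1))) := by
  induction B with
  | zero => simp [hj0, ED_nil_left]
  | succ B ih =>
    have htake (Z : List α) : Z.take (j (B + 1)) = Z.take (j B) ++ sub Z (j B) (j (B + 1)) := by
      rw [← List.take_append_drop (j B) (Z.take (j (B + 1))), List.take_take,
        min_eq_left (hj B (Nat.lt_add_one B))]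
      simp [sub]
    rw [sum_range_succ, htake X, htake Y]
    have hprefix := ih fun i hi => hj i (Nat.lt_add_right 1 hi)
    have hsplit := ED_append_le (X.take (j B)) (sub X (j B) (j (B + 1))) (Y.take (j B))
      (sub Y (j B) (j (B + 1)))
    omega

end EditDistance

theorem divide_and_conquer_lower_bound {α : Type*} [DecidableEq α]
    (n B : ℕ) (X Y : List α) (hX : X.length = n) (hY : Y.length = n)
    (j : ℕ → ℕ) (hj0 : j 0 = 0) (hjB : j B = n)
    (hmono : ∀ i < B, j i < j (i + 1)) (s : ℕ → ℤ) :
    ED X Y ≤ ∑ i ∈ Finset.range B,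
      (ED (sub X (j i) (j (i + 1)))
          (sub Y (j i + s i) (j (i + 1) + s i)) + 2 * (s i).natAbs) := by
  calc ED X Y = ED (X.take (j B)) (Y.take (j B)) := by
        rw [hjB, List.take_of_length_le hX.le, List.take_of_length_le hY.le]
    _ ≤ ∑ i ∈ range B, ED (sub X (j i) (j (i + 1))) (sub Y (j i) (j (i + 1))) :=
        ED_take_le_sum_sub X Y B j hj0 fun i hi => (hmono i hi).le
    _ ≤ _ := sum_le_sum fun i _ => ED_sub_le_sub_add _ Y (j i) (j (i + 1)) (s i)
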